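/- arXiv:2306.02387 — 2 statements merged into one kernel-verified Lean document; each statement's English description precedes it below -/
import Mathlib

section
/- Let a ∈ L^∞(ℝ) be continuous at 0. Then the matrix-valued function φ^a(t₁,t₂) = ∫_ℝ a((−t₁+s)/(2√(t₂(t₁²+1)))) H(s)[H(s)]^T ds on Π = ℝ × (0,∞) converges to a(0)·I uniformly in t₁ as t₂ → +∞: for every ε > 0 there exists Nₒ > 0 such that ‖φ^a(t₁,t₂) − a(0)·I‖ < ε for all t₂ > Nₒ and all t₁ ∈ ℝ. -/
open MeasureTheory Filter Topology
open scoped Matrix.Norms.L2Operator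

noncomputable section

/-- The physicists' Hermite polynomial `H_m(y) = (−1)^m e^{y²} (d/dy)^m e^{−y²}`. -/
def hermiteH (m : ℕ) (y : ℝ) : ℝ :=
  (-1 : ℝ) ^ m * Real.exp (y ^ 2) * iteratedDeriv m (fun x => Real.exp (-x ^ 2)) y

/-- The Hermite function `h_m(y) = (2^m m! √π)^{−1/2} H_m(y) e^{−y²/2}`. -/
def hermiteFun (m : ℕ) (y : ℝ) : ℝ :=
  (Real.sqrt (2 ^ m * m.factorial * Real.sqrt Real.pi))⁻¹ * hermiteH m y *
    Real.exp (-y ^ 2 / 2)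

/-- The matrix `H(y)[H(y)]ᵀ`, where `H(y) = (h_0(y), …, h_{n−1}(y))ᵀ`. -/
def HHT (n : ℕ) (y : ℝ) : Matrix (Fin n) (Fin n) ℝ :=
  Matrix.of fun j k : Fin n => hermiteFun j y * hermiteFun k y

/-- `φ^a(t₁,t₂) = ∫_ℝ a((−t₁+s)/(2√(t₂(t₁²+1)))) H(s)[H(s)]ᵀ ds` as a complex matrix. -/
def phiA (n : ℕ) (a : ℝ → ℂ) (t₁ t₂ : ℝ) : Matrix (Fin n) (Fin n) ℂ :=
  Matrix.of fun j k : Fin n =>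
    ∫ s : ℝ, a ((-t₁ + s) / (2 * Real.sqrt (t₂ * (t₁ ^ 2 + 1)))) * (HHT n s j k : ℂ)


/-!
Up to constants, `h_j h_k = H_j H_k e^{-s²}` and `H_k e^{-s²} = (-1)^k (e^{-s²})^{(k)}`, so `k`
integrations by parts turn `∫ h_j h_k` into `∫ H_j^{(k)} e^{-s²}`, which gives orthonormality of
the Hermite functions and hence `a(0) I = ∫ a(0) H(s) H(s)ᵀ ds`. The argument of `a` in `φ^a` is
at most `(1 + |s|) / (2 √t₂)` in absolute value, whatever `t₁`, so it tends to `0` along the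
countably generated filter `t₂ → ∞` on `ℝ × ℝ`; dominated convergence, with majorant
`‖a‖_∞ |h_j h_k|`, gives convergence of every entry.
-/

open Polynomial

def physHermite : ℕ → ℝ[X]
  | 0 => 1
  | m + 1 => 2 * X * physHermite m - derivative (physHermite m)

lemma natDegree_physHermite_le (m : ℕ) : (physHermite m).natDegree ≤ m := by
  induction m with
  | zero => simp [physHermite]
  | succ m ih =>
    rw [physHermite]
    refine (natDegree_sub_le _ _).trans (max_le ?_ ?_)
    · refine natDegree_mul_le.trans ?_
      have : (2 * X : ℝ[X]).natDegree ≤ 1 := natDegree_mul_le.trans (by simp)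
      omega
    · have := natDegree_derivative_le (physHermite m)
      omega

lemma coeff_physHermite_self (m : ℕ) : (physHermite m).coeff m = 2 ^ m := by
  induction m with
  | zero => simp [physHermite]
  | succ m ih =>
    have hderiv : (derivative (physHermite m)).coeff (m + 1) = 0 :=
      coeff_eq_zero_of_natDegree_lt <|
        (natDegree_derivative_le _).trans_lt (by have := natDegree_physHermite_le m; omega)
    rw [physHermite, coeff_sub, hderiv, mul_assoc, ← C_ofNat, coeff_C_mul, coeff_X_mul, ih]
    ring

lemma hasDerivAt_eval_mul_exp_neg_sq (q : ℝ[X]) (x : ℝ) :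
    HasDerivAt (fun y => q.eval y * Real.exp (-y ^ 2))
      ((derivative q - 2 * X * q).eval x * Real.exp (-x ^ 2)) x := by
  have hexp : HasDerivAt (fun y : ℝ => Real.exp (-y ^ 2)) (Real.exp (-x ^ 2) * -(2 * x)) x :=
    ((hasDerivAt_pow 2 x).neg.congr_deriv (by ring)).exp
  refine ((q.hasDerivAt x).mul hexp).congr_deriv ?_
  simp only [eval_sub, eval_mul, eval_ofNat, eval_X]
  ring

lemma iteratedDeriv_exp_neg_sq (m : ℕ) :
    iteratedDeriv m (fun x : ℝ => Real.exp (-x ^ 2))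
      = fun x => (-1) ^ m * (physHermite m).eval x * Real.exp (-x ^ 2) := by
  induction m with
  | zero => simp [physHermite]
  | succ m ih =>
    ext x
    rw [iteratedDeriv_succ, ih]
    simp_rw [mul_assoc]
    rw [((hasDerivAt_eval_mul_exp_neg_sq _ x).const_mul _).deriv, physHermite]
    simp only [eval_sub, eval_mul]
    ring

lemma hermiteH_eq_eval_physHermite (m : ℕ) (y : ℝ) : hermiteH m y = (physHermite m).eval y := by
  have hexp : Real.exp (y ^ 2) * Real.exp (-y ^ 2) = 1 := by rw [← Real.exp_add]; simp
  rw [hermiteH, iteratedDeriv_exp_neg_sq]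
  calc _ = ((-1 : ℝ) ^ m * (-1) ^ m) * (Real.exp (y ^ 2) * Real.exp (-y ^ 2)) *
        (physHermite m).eval y := by ring
    _ = _ := by rw [← mul_pow, hexp]; simp

lemma integrable_eval_mul_exp_neg_sq (p : ℝ[X]) :
    Integrable (fun x => p.eval x * Real.exp (-x ^ 2)) := by
  simp_rw [eval_eq_sum_range, Finset.sum_mul]
  refine integrable_finsetSum _ fun i _ => ?_
  have h := integrable_rpow_mul_exp_neg_mul_sq one_pos (s := i)
    (neg_one_lt_zero.trans_le (Nat.cast_nonneg i))
  simp only [Real.rpow_natCast, neg_one_mul] at h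
  simpa only [mul_assoc] using h.const_mul (p.coeff i)

lemma integral_eval_mul_physHermite_succ (p : ℝ[X]) (k : ℕ) :
    ∫ y, (p * physHermite (k + 1)).eval y * Real.exp (-y ^ 2)
      = ∫ y, (derivative p * physHermite k).eval y * Real.exp (-y ^ 2) := by
  have h := integral_eq_zero_of_hasDerivAt_of_integrable
    (hasDerivAt_eval_mul_exp_neg_sq (p * physHermite k))
    (integrable_eval_mul_exp_neg_sq _) (integrable_eval_mul_exp_neg_sq _)
  have hq : derivative (p * physHermite k) - 2 * X * (p * physHermite k)
      = derivative p * physHermite k - p * physHermite (k + 1) := by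
    rw [derivative_mul, physHermite]; ring
  simp_rw [hq, eval_sub, sub_mul] at h
  rw [integral_sub (integrable_eval_mul_exp_neg_sq _) (integrable_eval_mul_exp_neg_sq _)] at h
  linarith

lemma integral_eval_mul_physHermite (p : ℝ[X]) (k : ℕ) :
    ∫ y, (p * physHermite k).eval y * Real.exp (-y ^ 2)
      = ∫ y, (derivative^[k] p).eval y * Real.exp (-y ^ 2) := by
  induction k generalizing p with
  | zero => simp [physHermite]
  | succ k ih => rw [integral_eval_mul_physHermite_succ, ih, Function.iterate_succ_apply]

lemma integral_physHermite_mul_of_lt {j k : ℕ} (hjk : j < k) :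
    ∫ y, (physHermite j * physHermite k).eval y * Real.exp (-y ^ 2) = 0 := by
  rw [integral_eval_mul_physHermite,
    iterate_derivative_eq_zero ((natDegree_physHermite_le j).trans_lt hjk)]
  simp

lemma integral_physHermite_mul_self (k : ℕ) :
    ∫ y, (physHermite k * physHermite k).eval y * Real.exp (-y ^ 2)
      = 2 ^ k * k.factorial * √Real.pi := by
  have hdeg : (derivative^[k] (physHermite k)).natDegree ≤ 0 := by
    have := natDegree_iterate_derivative (physHermite k) k
    have := natDegree_physHermite_le k
    omega
  have hconst : derivative^[k] (physHermite k) = C ((2 : ℝ) ^ k * k.factorial) := by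
    rw [eq_C_of_natDegree_le_zero hdeg, coeff_iterate_derivative, zero_add,
      Nat.descFactorial_self, coeff_physHermite_self, nsmul_eq_mul, mul_comm]
  have hgauss : ∫ y : ℝ, Real.exp (-y ^ 2) = √Real.pi := by
    simpa using integral_gaussian 1
  rw [integral_eval_mul_physHermite, hconst]
  simp only [eval_C]
  rw [integral_const_mul, hgauss]

lemma hermiteFun_mul_hermiteFun (j k : ℕ) (y : ℝ) :
    hermiteFun j y * hermiteFun k y
      = ((√(2 ^ j * j.factorial * √Real.pi))⁻¹ * (√(2 ^ k * k.factorial * √Real.pi))⁻¹) *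
        ((physHermite j * physHermite k).eval y * Real.exp (-y ^ 2)) := by
  have hexp : Real.exp (-y ^ 2 / 2) * Real.exp (-y ^ 2 / 2) = Real.exp (-y ^ 2) := by
    rw [← Real.exp_add]; ring_nf
  rw [hermiteFun, hermiteFun, hermiteH_eq_eval_physHermite, hermiteH_eq_eval_physHermite,
    eval_mul, ← hexp]
  ring

lemma integrable_hermiteFun_mul_hermiteFun (j k : ℕ) :
    Integrable (fun y => hermiteFun j y * hermiteFun k y) := by
  simp_rw [hermiteFun_mul_hermiteFun]
  exact (integrable_eval_mul_exp_neg_sq _).const_mul _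

lemma integral_hermiteFun_mul_hermiteFun (j k : ℕ) :
    ∫ y, hermiteFun j y * hermiteFun k y = if j = k then 1 else 0 := by
  simp_rw [hermiteFun_mul_hermiteFun]
  rw [integral_const_mul]
  rcases lt_trichotomy j k with hjk | rfl | hjk
  · rw [integral_physHermite_mul_of_lt hjk, if_neg hjk.ne, mul_zero]
  · have hpos : 0 < 2 ^ j * (j.factorial : ℝ) * √Real.pi := by positivity
    rw [integral_physHermite_mul_self, if_pos rfl, ← mul_inv, Real.mul_self_sqrt hpos.le,
      inv_mul_cancel₀ hpos.ne']
  · simp_rw [mul_comm (physHermite j)]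
    rw [integral_physHermite_mul_of_lt hjk, if_neg hjk.ne', mul_zero]

lemma integral_HHT (n : ℕ) (j k : Fin n) :
    ∫ s, (HHT n s j k : ℂ) = (1 : Matrix (Fin n) (Fin n) ℂ) j k := by
  simp only [HHT, Matrix.of_apply]
  rw [integral_complex_ofReal, integral_hermiteFun_mul_hermiteFun, Matrix.one_apply]
  simp only [Fin.val_inj]
  split_ifs <;> simp

lemma abs_neg_add_div_sqrt_sq_add_one_le (t s : ℝ) : |-t + s| / √(t ^ 2 + 1) ≤ 1 + |s| := by
  have hone : 1 ≤ √(t ^ 2 + 1) := Real.one_le_sqrt.2 (le_add_of_nonneg_left (sq_nonneg t))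
  have ht : |t| ≤ √(t ^ 2 + 1) := Real.abs_le_sqrt (by linarith)
  rw [div_le_iff₀ (by positivity)]
  calc |-t + s| ≤ |t| + |s| := (abs_add_le _ _).trans_eq (by rw [abs_neg])
    _ ≤ _ := by nlinarith [abs_nonneg s]

lemma tendsto_phiA_arg (s : ℝ) :
    Tendsto (fun t : ℝ × ℝ => (-t.1 + s) / (2 * √(t.2 * (t.1 ^ 2 + 1))))
      (comap Prod.snd atTop) (𝓝 0) := by
  have hlim : Tendsto (fun x : ℝ => (1 + |s|) * (2 * √x)⁻¹) atTop (𝓝 0) := by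
    simpa using ((Real.tendsto_sqrt_atTop.const_mul_atTop two_pos).inv_tendsto_atTop.const_mul
      (1 + |s|))
  refine squeeze_zero_norm' ?_ (hlim.comp tendsto_comap)
  filter_upwards [tendsto_comap.eventually (eventually_gt_atTop 0)] with t ht
  have hden : 0 < 2 * (√t.2 * √(t.1 ^ 2 + 1)) :=
    mul_pos two_pos (mul_pos (Real.sqrt_pos.2 ht) (Real.sqrt_pos.2 (by positivity)))
  rw [Real.sqrt_mul ht.le, Real.norm_eq_abs, abs_div, abs_of_pos hden]
  calc |-t.1 + s| / (2 * (√t.2 * √(t.1 ^ 2 + 1)))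
      = |-t.1 + s| / √(t.1 ^ 2 + 1) / (2 * √t.2) := by ring
    _ ≤ (1 + |s|) / (2 * √t.2) :=
      div_le_div_of_nonneg_right (abs_neg_add_div_sqrt_sq_add_one_le t.1 s) (by positivity)
    _ = _ := div_eq_mul_inv _ _

lemma tendsto_integral_comp_mul {α ι : Type*} [MeasurableSpace α] {μ : Measure α}
    {l : Filter ι} [l.IsCountablyGenerated] {a : ℝ → ℂ} {C : ℝ} (ha_meas : Measurable a)
    (ha_bdd : ∀ y, ‖a y‖ ≤ C) (ha_cont : ContinuousAt a 0) {g : α → ℂ} (hg : Integrable g μ)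
    {θ : ι → α → ℝ} (hθ_meas : ∀ i, Measurable (θ i)) (hθ : ∀ x, Tendsto (θ · x) l (𝓝 0)) :
    Tendsto (fun i => ∫ x, a (θ i x) * g x ∂μ) l (𝓝 (a 0 * ∫ x, g x ∂μ)) := by
  rw [← integral_const_mul]
  refine tendsto_integral_filter_of_dominated_convergence (fun x => C * ‖g x‖)
    (Eventually.of_forall fun i =>
      (ha_meas.comp (hθ_meas i)).aestronglyMeasurable.mul hg.aestronglyMeasurable)
    (Eventually.of_forall fun i => Eventually.of_forall fun x => ?_)
    (hg.norm.const_mul C)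
    (Eventually.of_forall fun x => (ha_cont.tendsto.comp (hθ x)).mul_const (g x))
  rw [norm_mul]
  exact mul_le_mul_of_nonneg_right (ha_bdd _) (norm_nonneg _)

lemma tendsto_phiA (n : ℕ) {a : ℝ → ℂ} {C : ℝ} (ha_meas : Measurable a)
    (ha_bdd : ∀ y, ‖a y‖ ≤ C) (ha_cont : ContinuousAt a 0) :
    Tendsto (fun t : ℝ × ℝ => phiA n a t.1 t.2) (comap Prod.snd atTop)
      (𝓝 (a 0 • (1 : Matrix (Fin n) (Fin n) ℂ))) := by
  -- The L2 operator norm on matrices induces the product topology.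
  refine tendsto_pi_nhds.2 fun j => tendsto_pi_nhds.2 fun k => ?_
  have h := tendsto_integral_comp_mul ha_meas ha_bdd ha_cont
    (integrable_hermiteFun_mul_hermiteFun j k).ofReal
    (fun t => (measurable_const.add measurable_id).div_const _) tendsto_phiA_arg
  simpa [phiA, HHT, ← integral_HHT] using h

theorem phiA_limit_top_uniform_general (n : ℕ) (a : ℝ → ℂ)
    (ha_meas : Measurable a) (ha_bdd : ∃ C : ℝ, ∀ y : ℝ, ‖a y‖ ≤ C)
    (ha_cont : ContinuousAt a 0) :
    ∀ ε > (0 : ℝ), ∃ N > (0 : ℝ), ∀ t₁ t₂ : ℝ, N < t₂ →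
      ‖phiA n a t₁ t₂ - a 0 • (1 : Matrix (Fin n) (Fin n) ℂ)‖ < ε := by
  intro ε hε
  obtain ⟨C, hC⟩ := ha_bdd
  obtain ⟨N, hN⟩ := eventually_atTop.1 <| eventually_comap.1 <|
    Metric.tendsto_nhds.1 (tendsto_phiA n ha_meas hC ha_cont) ε hε
  refine ⟨max N 1, by positivity, fun t₁ t₂ ht => ?_⟩
  rw [← dist_eq_norm]
  exact hN t₂ (le_of_max_le_left ht.le) (t₁, t₂) rfl

/-- If `a ∈ L^∞(ℝ)` is continuous at `0`, then `φ^a(t₁,t₂) → a(0)·I`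
uniformly in `t₁` as `t₂ → +∞`. -/
theorem phiA_limit_top_uniform (n : ℕ) (hn : 1 ≤ n) (a : ℝ → ℂ)
    (ha_meas : Measurable a) (ha_bdd : ∃ C : ℝ, ∀ y : ℝ, ‖a y‖ ≤ C)
    (ha_cont : ContinuousAt a 0) :
    ∀ ε > (0 : ℝ), ∃ N > (0 : ℝ), ∀ t₁ t₂ : ℝ, N < t₂ →
      ‖phiA n a t₁ t₂ - a 0 • (1 : Matrix (Fin n) (Fin n) ℂ)‖ < ε :=
  phiA_limit_top_uniform_general n a ha_meas ha_bdd ha_cont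
end
end

section
/- Let a ∈ PC(ℝ̄,{0}). Then the matrix-valued function φ^a(t₁,t₂) = ∫_ℝ a((−t₁+s)/(2√(t₂(t₁²+1)))) H(s)[H(s)]^T ds, defined on Π = ℝ × (0,∞), extends to a continuous M_n(ℂ)-valued function on the compactification Π̄ = [−∞,+∞] × [0,+∞]. -/
/-! For `s ≠ t₁` the argument `(s - t₁) / (2 √(t₂ (t₁² + 1)))` of `a` has the sign of `s - t₁`
and modulus `D(s, t₁) / (2 √t₂)`, where `D(s, t) = |s - t| / √(t² + 1)` extends continuously to
`t = ±∞` by `1` and is positive for `t ≠ s`. Extending `a` on each half-line continuously to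
`[0, ∞]` by its limits at `0±` and `±∞`, the integrand of `φ^a` extends to a bounded function on
`Π̄` that is continuous at every point with `t₁ ≠ s`, i.e. for almost every `s`. Dominated
convergence against the integrable functions `h_j h_k` (polynomials times `e^{-s²}`) then gives
a continuous extension of `φ^a`. -/

open MeasureTheory Filter Topology

noncomputable section

/-- `a ∈ PC(ℝ̄, {0})`: bounded, continuous away from `0`, with finite limits at `±∞`
and finite one-sided limits at `0`. -/
def IsPCSymbol (a : ℝ → ℂ) : Prop :=
  (∃ C : ℝ, ∀ y : ℝ, ‖a y‖ ≤ C) ∧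
  ContinuousOn a ({0}ᶜ : Set ℝ) ∧
  (∃ l : ℂ, Tendsto a atBot (𝓝 l)) ∧ (∃ l : ℂ, Tendsto a atTop (𝓝 l)) ∧
  (∃ l : ℂ, Tendsto a (𝓝[<] (0 : ℝ)) (𝓝 l)) ∧
  (∃ l : ℂ, Tendsto a (𝓝[>] (0 : ℝ)) (𝓝 l))

open scoped ENNReal
open Polynomial Set

section Hermite

theorem exists_iteratedDeriv_exp_neg_sq_eq (m : ℕ) :
    ∃ P : ℝ[X], ∀ y, iteratedDeriv m (fun x => Real.exp (-x ^ 2)) y =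
      P.eval y * Real.exp (-y ^ 2) := by
  induction m with
  | zero => exact ⟨1, fun y => by simp⟩
  | succ m ih =>
    obtain ⟨P, hP⟩ := ih
    refine ⟨derivative P - 2 * X * P, fun y => ?_⟩
    have hderiv : HasDerivAt (fun x => P.eval x * Real.exp (-x ^ 2))
        (P.derivative.eval y * Real.exp (-y ^ 2) +
          P.eval y * (Real.exp (-y ^ 2) * -(2 * y ^ 1))) y :=
      (P.hasDerivAt y).mul (hasDerivAt_pow 2 y).neg.exp
    rw [iteratedDeriv_succ, funext hP, hderiv.deriv]
    simp only [eval_sub, eval_mul, eval_X, eval_ofNat]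
    ring

theorem exists_hermiteFun_eq (m : ℕ) :
    ∃ P : ℝ[X], ∀ y, hermiteFun m y = P.eval y * Real.exp (-y ^ 2 / 2) := by
  obtain ⟨P, hP⟩ := exists_iteratedDeriv_exp_neg_sq_eq m
  set c := (Real.sqrt (2 ^ m * m.factorial * Real.sqrt Real.pi))⁻¹ * (-1) ^ m
  refine ⟨C c * P, fun y => ?_⟩
  have hexp : Real.exp (y ^ 2) * Real.exp (-y ^ 2) = 1 := by
    rw [← Real.exp_add, add_neg_cancel, Real.exp_zero]
  simp only [hermiteFun, hermiteH, hP y, eval_mul, eval_C, c]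
  linear_combination c * P.eval y * Real.exp (-y ^ 2 / 2) * hexp

theorem exists_HHT_apply_eq (n : ℕ) (j k : Fin n) :
    ∃ Q : ℝ[X], ∀ y, HHT n y j k = Q.eval y * Real.exp (-y ^ 2) := by
  obtain ⟨P, hP⟩ := exists_hermiteFun_eq j
  obtain ⟨R, hR⟩ := exists_hermiteFun_eq k
  refine ⟨P * R, fun y => ?_⟩
  have hexp : Real.exp (-y ^ 2 / 2) * Real.exp (-y ^ 2 / 2) = Real.exp (-y ^ 2) := by
    rw [← Real.exp_add, add_halves]
  simp only [HHT, Matrix.of_apply, hP y, hR y, eval_mul, ← hexp]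
  ring

theorem integrable_eval_mul_exp_neg_mul_sq {b : ℝ} (hb : 0 < b) (Q : ℝ[X]) :
    Integrable fun y => Q.eval y * Real.exp (-b * y ^ 2) := by
  have hmonomial (i : ℕ) : Integrable fun y : ℝ => y ^ i * Real.exp (-b * y ^ 2) := by
    simpa [Real.rpow_natCast] using
      integrable_rpow_mul_exp_neg_mul_sq hb (s := i) (by linarith [i.cast_nonneg (α := ℝ)])
  simp_rw [eval_eq_sum_range, Finset.sum_mul, mul_assoc]
  exact integrable_finsetSum _ fun i _ => (hmonomial i).const_mul _

theorem continuous_HHT_apply (n : ℕ) (j k : Fin n) : Continuous fun y => HHT n y j k := by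
  obtain ⟨Q, hQ⟩ := exists_HHT_apply_eq n j k
  simp only [hQ]
  fun_prop

theorem integrable_HHT_apply (n : ℕ) (j k : Fin n) : Integrable fun y => HHT n y j k := by
  obtain ⟨Q, hQ⟩ := exists_HHT_apply_eq n j k
  simpa [hQ] using integrable_eval_mul_exp_neg_mul_sq one_pos Q

end Hermite

theorem continuous_integral_mul_of_bounded {X α : Type*} [TopologicalSpace X]
    [FirstCountableTopology X] [MeasurableSpace α] {μ : Measure α} {L : X → α → ℂ} {g : α → ℝ}
    {C : ℝ} (hL_meas : ∀ p, AEStronglyMeasurable (L p) μ) (hL_bound : ∀ p x, ‖L p x‖ ≤ C)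
    (hL_cont : ∀ p, ∀ᵐ x ∂μ, ContinuousAt (fun q => L q x) p) (hg : Integrable g μ) :
    Continuous fun p => ∫ x, L p x * g x ∂μ := by
  refine continuous_iff_continuousAt.mpr fun p => continuousAt_of_dominated
    (bound := fun x => C * ‖g x‖) ?_ ?_ (hg.norm.const_mul C) ?_
  · exact Eventually.of_forall fun q =>
      (hL_meas q).mul (Complex.continuous_ofReal.comp_aestronglyMeasurable hg.1)
  · refine Eventually.of_forall fun q => ae_of_all _ fun x => ?_
    rw [norm_mul, Complex.norm_real]
    exact mul_le_mul_of_nonneg_right (hL_bound q x) (norm_nonneg _)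
  · filter_upwards [hL_cont p] with x hx
    exact hx.mul continuousAt_const

section ExtendToENNReal

variable {β : Type*}

def extendToENNReal (f : ℝ → β) (l₀ lTop : β) (x : ℝ≥0∞) : β :=
  if x = 0 then l₀ else if x = ∞ then lTop else f x.toReal

@[simp]
theorem extendToENNReal_zero (f : ℝ → β) (l₀ lTop : β) : extendToENNReal f l₀ lTop 0 = l₀ := by
  simp [extendToENNReal]

@[simp]
theorem extendToENNReal_top (f : ℝ → β) (l₀ lTop : β) : extendToENNReal f l₀ lTop ∞ = lTop := by
  simp [extendToENNReal]

theorem extendToENNReal_of_ne {f : ℝ → β} {l₀ lTop : β} {x : ℝ≥0∞} (h₀ : x ≠ 0) (hTop : x ≠ ∞) :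
    extendToENNReal f l₀ lTop x = f x.toReal := by
  simp [extendToENNReal, h₀, hTop]

theorem extendToENNReal_ofReal {f : ℝ → β} {l₀ lTop : β} {x : ℝ} (hx : 0 < x) :
    extendToENNReal f l₀ lTop (ENNReal.ofReal x) = f x := by
  rw [extendToENNReal_of_ne (ENNReal.ofReal_pos.mpr hx).ne' ENNReal.ofReal_ne_top,
    ENNReal.toReal_ofReal hx.le]

theorem norm_extendToENNReal_le [SeminormedAddGroup β] {f : ℝ → β} {l₀ lTop : β} {C : ℝ}
    (hC : ∀ y, ‖f y‖ ≤ C) (h₀ : Tendsto f (𝓝[>] 0) (𝓝 l₀)) (hTop : Tendsto f atTop (𝓝 lTop))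
    (x : ℝ≥0∞) : ‖extendToENNReal f l₀ lTop x‖ ≤ C := by
  unfold extendToENNReal
  split_ifs
  · exact le_of_tendsto h₀.norm (Eventually.of_forall hC)
  · exact le_of_tendsto hTop.norm (Eventually.of_forall hC)
  · exact hC _

theorem ENNReal.tendsto_toReal_nhdsNE_zero :
    Tendsto ENNReal.toReal (𝓝[≠] 0) (𝓝[>] 0) := by
  refine tendsto_nhdsWithin_of_tendsto_nhds_of_eventually_within _ ?_ ?_
  · simpa using (ENNReal.tendsto_toReal ENNReal.zero_ne_top).mono_left nhdsWithin_le_nhds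
  · filter_upwards [self_mem_nhdsWithin, nhdsWithin_le_nhds (Iio_mem_nhds ENNReal.zero_lt_top)]
      with x hx₀ hxTop
    exact ENNReal.toReal_pos hx₀ hxTop.ne

theorem ENNReal.tendsto_toReal_nhdsNE_top :
    Tendsto ENNReal.toReal (𝓝[≠] ∞) atTop := by
  refine tendsto_atTop.mpr fun b => ?_
  filter_upwards [nhdsWithin_le_nhds (Ioi_mem_nhds (ENNReal.ofReal_lt_top (r := b))),
    self_mem_nhdsWithin] with x hx hxTop
  exact (ENNReal.ofReal_le_iff_le_toReal hxTop).mp hx.le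

theorem continuous_extendToENNReal [TopologicalSpace β] {f : ℝ → β} {l₀ lTop : β}
    (hf : ContinuousOn f (Ioi 0)) (h₀ : Tendsto f (𝓝[>] 0) (𝓝 l₀))
    (hTop : Tendsto f atTop (𝓝 lTop)) : Continuous (extendToENNReal f l₀ lTop) := by
  refine continuous_iff_continuousAt.mpr fun x => ?_
  by_cases hx₀ : x = 0
  · subst hx₀
    rw [← continuousWithinAt_compl_self, ContinuousWithinAt, extendToENNReal_zero]
    refine (h₀.comp ENNReal.tendsto_toReal_nhdsNE_zero).congr' ?_
    filter_upwards [self_mem_nhdsWithin,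
      nhdsWithin_le_nhds (Iio_mem_nhds ENNReal.zero_lt_top)] with y hy₀ hyTop
    rw [Function.comp_apply, extendToENNReal_of_ne hy₀ hyTop.ne]
  by_cases hxTop : x = ∞
  · subst hxTop
    rw [← continuousWithinAt_compl_self, ContinuousWithinAt, extendToENNReal_top]
    refine (hTop.comp ENNReal.tendsto_toReal_nhdsNE_top).congr' ?_
    filter_upwards [self_mem_nhdsWithin,
      nhdsWithin_le_nhds (Ioi_mem_nhds ENNReal.zero_lt_top)] with y hyTop hy₀
    rw [Function.comp_apply, extendToENNReal_of_ne hy₀.ne' hyTop]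
  · have hf_toReal : ContinuousAt (f ∘ ENNReal.toReal) x :=
      (hf.continuousAt (Ioi_mem_nhds (ENNReal.toReal_pos hx₀ hxTop))).comp
        (ENNReal.tendsto_toReal hxTop)
    refine hf_toReal.congr ?_
    filter_upwards [isOpen_ne.mem_nhds hx₀, isOpen_ne.mem_nhds hxTop] with y hy₀ hyTop
    rw [Function.comp_apply, extendToENNReal_of_ne hy₀ hyTop]

end ExtendToENNReal

section ScaledDist

def scaledDist (s : ℝ) (u : EReal) : ℝ :=
  if u = ⊤ ∨ u = ⊥ then 1 else |s - u.toReal| / Real.sqrt (u.toReal ^ 2 + 1)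

@[simp]
theorem scaledDist_coe (s t : ℝ) : scaledDist s t = |s - t| / Real.sqrt (t ^ 2 + 1) := by
  simp [scaledDist]

theorem scaledDist_pos {s : ℝ} {u : EReal} (h : u ≠ s) : 0 < scaledDist s u := by
  induction u using EReal.rec with
  | coe t =>
    rw [scaledDist_coe]
    exact div_pos (abs_pos.mpr (sub_ne_zero.mpr fun hst => h (hst ▸ rfl)))
      (Real.sqrt_pos.mpr (by positivity))
  | _ => simp [scaledDist]

theorem tendsto_scaledDist_coe_atTop (s : ℝ) :
    Tendsto (fun t : ℝ => scaledDist s t) atTop (𝓝 1) := by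
  have hcont : ContinuousAt (fun r : ℝ => |1 - s * r| / Real.sqrt (1 + r ^ 2)) 0 :=
    ContinuousAt.div (by fun_prop) (by fun_prop) (by simp)
  have hlim := hcont.tendsto.comp tendsto_inv_atTop_zero
  simp only [mul_zero, sub_zero, abs_one, ne_eq, OfNat.ofNat_ne_zero, not_false_eq_true,
    zero_pow, add_zero, Real.sqrt_one, div_one] at hlim
  refine hlim.congr' ?_
  filter_upwards [eventually_gt_atTop 0] with t ht
  have hnum : |1 - s * t⁻¹| = |s - t| / t := by
    rw [← abs_of_pos ht, ← abs_div, abs_of_pos ht, abs_sub_comm, sub_div, div_self ht.ne',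
      div_eq_mul_inv]
  have hden : Real.sqrt (1 + t⁻¹ ^ 2) = Real.sqrt (t ^ 2 + 1) / t := by
    rw [show 1 + t⁻¹ ^ 2 = (t ^ 2 + 1) / t ^ 2 by field_simp, Real.sqrt_div (by positivity),
      Real.sqrt_sq ht.le]
  rw [Function.comp_apply, scaledDist_coe, hnum, hden, div_div_div_cancel_right₀ ht.ne']

theorem tendsto_scaledDist_coe_atBot (s : ℝ) :
    Tendsto (fun t : ℝ => scaledDist s t) atBot (𝓝 1) := by
  refine ((tendsto_scaledDist_coe_atTop (-s)).comp tendsto_neg_atBot_atTop).congr fun t => ?_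
  rw [Function.comp_apply, scaledDist_coe, scaledDist_coe, neg_sq, ← abs_neg]
  ring_nf

theorem continuous_scaledDist_right (s : ℝ) : Continuous (scaledDist s) := by
  refine continuous_iff_continuousAt.mpr fun u => ?_
  induction u using EReal.rec with
  | bot =>
    rw [← continuousWithinAt_compl_self, ContinuousWithinAt, EReal.nhdsWithin_bot,
      tendsto_map'_iff]
    have hbot : scaledDist s ⊥ = 1 := by simp [scaledDist]
    exact hbot ▸ tendsto_scaledDist_coe_atBot s
  | top =>
    rw [← continuousWithinAt_compl_self, ContinuousWithinAt, EReal.nhdsWithin_top,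
      tendsto_map'_iff]
    have htop : scaledDist s ⊤ = 1 := by simp [scaledDist]
    exact htop ▸ tendsto_scaledDist_coe_atTop s
  | coe t =>
    have h_toReal : ContinuousAt EReal.toReal (t : EReal) :=
      EReal.tendsto_toReal (EReal.coe_ne_top t) (EReal.coe_ne_bot t)
    have hformula : ContinuousAt
        (fun v : EReal => |s - v.toReal| / Real.sqrt (v.toReal ^ 2 + 1)) (t : EReal) :=
      ContinuousAt.div (by fun_prop) (by fun_prop) (Real.sqrt_pos.mpr (by positivity)).ne'
    refine hformula.congr ?_
    filter_upwards [isOpen_ne.mem_nhds (EReal.coe_ne_top t),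
      isOpen_ne.mem_nhds (EReal.coe_ne_bot t)] with v hv_top hv_bot
    simp [scaledDist, hv_top, hv_bot]

theorem continuous_scaledDist_left (u : EReal) : Continuous fun s => scaledDist s u := by
  unfold scaledDist
  split_ifs
  · exact continuous_const
  · exact Continuous.div_const (by fun_prop) _

end ScaledDist

section ExtendedSymbol

/-- For `t₁ ≠ s`, the `ℝ≥0∞` conventions `x / 0 = ∞` and `x / ∞ = 0` give the values at `t₂ = 0`
and `t₂ = ∞`. -/
def absArg (s : ℝ) (p : EReal × ℝ≥0∞) : ℝ≥0∞ :=
  ENNReal.ofReal (scaledDist s p.1) / (2 * p.2 ^ (1 / 2 : ℝ))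

theorem continuousAt_absArg {s : ℝ} {p : EReal × ℝ≥0∞} (hp : p.1 ≠ s) :
    ContinuousAt (absArg s) p := by
  have hnum : Continuous fun q : EReal × ℝ≥0∞ => ENNReal.ofReal (scaledDist s q.1) :=
    ENNReal.continuous_ofReal.comp ((continuous_scaledDist_right s).comp continuous_fst)
  have hden : Continuous fun q : EReal × ℝ≥0∞ => 2 * q.2 ^ (1 / 2 : ℝ) :=
    (ENNReal.continuous_const_mul ENNReal.ofNat_ne_top).comp
      (ENNReal.continuous_rpow_const.comp continuous_snd)
  exact ENNReal.Tendsto.div hnum.continuousAt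
    (Or.inl (ENNReal.ofReal_pos.mpr (scaledDist_pos hp)).ne')
    hden.continuousAt (Or.inr ENNReal.ofReal_ne_top)

theorem measurable_absArg_left (p : EReal × ℝ≥0∞) : Measurable fun s => absArg s p :=
  (ENNReal.measurable_ofReal.comp (continuous_scaledDist_left p.1).measurable).div_const _

theorem absArg_coe_ofReal (s t₁ : ℝ) {t₂ : ℝ} (ht₂ : 0 < t₂) :
    absArg s (t₁, ENNReal.ofReal t₂) =
      ENNReal.ofReal (|s - t₁| / (2 * Real.sqrt (t₂ * (t₁ ^ 2 + 1)))) := by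
  have hsqrt : ENNReal.ofReal t₂ ^ (1 / 2 : ℝ) = ENNReal.ofReal (Real.sqrt t₂) := by
    rw [ENNReal.ofReal_rpow_of_pos ht₂, Real.sqrt_eq_rpow]
  rw [absArg, scaledDist_coe, hsqrt, ← ENNReal.ofReal_ofNat 2, ← ENNReal.ofReal_mul zero_le_two,
    ← ENNReal.ofReal_div_of_pos (by positivity), Real.sqrt_mul ht₂.le, div_div, mul_comm,
    ← mul_assoc]

variable {β : Type*}

def extendedSymbol (bp bm : ℝ≥0∞ → β) (s : ℝ) (p : EReal × ℝ≥0∞) : β :=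
  if p.1 < s then bp (absArg s p) else bm (absArg s p)

theorem continuousAt_extendedSymbol [TopologicalSpace β] {bp bm : ℝ≥0∞ → β}
    (hbp : Continuous bp) (hbm : Continuous bm) {s : ℝ} {p : EReal × ℝ≥0∞} (hp : p.1 ≠ s) :
    ContinuousAt (fun q => extendedSymbol bp bm s q) p := by
  rcases hp.lt_or_gt with hlt | hgt
  · refine (hbp.continuousAt.comp (continuousAt_absArg hp)).congr ?_
    filter_upwards [continuous_fst.continuousAt.eventually (eventually_lt_nhds hlt)] with q hq
    simp [extendedSymbol, hq]
  · refine (hbm.continuousAt.comp (continuousAt_absArg hp)).congr ?_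
    filter_upwards [continuous_fst.continuousAt.eventually (eventually_gt_nhds hgt)] with q hq
    simp [extendedSymbol, hq.not_gt]

theorem measurable_extendedSymbol_left [MeasurableSpace β] {bp bm : ℝ≥0∞ → β}
    (hbp : Measurable bp) (hbm : Measurable bm) (p : EReal × ℝ≥0∞) :
    Measurable fun s => extendedSymbol bp bm s p :=
  Measurable.ite (measurableSet_lt measurable_const measurable_coe_real_ereal)
    (hbp.comp (measurable_absArg_left p)) (hbm.comp (measurable_absArg_left p))

theorem norm_extendedSymbol_le [Norm β] {bp bm : ℝ≥0∞ → β} {C : ℝ} (hbp : ∀ x, ‖bp x‖ ≤ C)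
    (hbm : ∀ x, ‖bm x‖ ≤ C) (s : ℝ) (p : EReal × ℝ≥0∞) : ‖extendedSymbol bp bm s p‖ ≤ C := by
  unfold extendedSymbol
  split_ifs
  exacts [hbp _, hbm _]

theorem extendedSymbol_coe_ofReal {a : ℝ → β} {bp bm : ℝ≥0∞ → β}
    (hbp : ∀ x, 0 < x → bp (ENNReal.ofReal x) = a x)
    (hbm : ∀ x, 0 < x → bm (ENNReal.ofReal x) = a (-x))
    {s t₁ t₂ : ℝ} (hs : s ≠ t₁) (ht₂ : 0 < t₂) :
    extendedSymbol bp bm s (t₁, ENNReal.ofReal t₂) =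
      a ((-t₁ + s) / (2 * Real.sqrt (t₂ * (t₁ ^ 2 + 1)))) := by
  have hd : 0 < 2 * Real.sqrt (t₂ * (t₁ ^ 2 + 1)) := by positivity
  have hpos : 0 < |s - t₁| / (2 * Real.sqrt (t₂ * (t₁ ^ 2 + 1))) :=
    div_pos (abs_pos.mpr (sub_ne_zero.mpr hs)) hd
  rw [extendedSymbol, absArg_coe_ofReal s t₁ ht₂]
  rcases hs.lt_or_gt with hlt | hgt
  · rw [if_neg (show ¬(t₁ : EReal) < s by exact_mod_cast hlt.not_gt), hbm _ hpos,
      abs_of_neg (sub_neg.mpr hlt), ← neg_div]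
    ring_nf
  · rw [if_pos (show (t₁ : EReal) < s by exact_mod_cast hgt), hbp _ hpos,
      abs_of_pos (sub_pos.mpr hgt)]
    ring_nf

end ExtendedSymbol

theorem phiA_extends_continuously_matrix_PC_general (n : ℕ) (a : ℝ → ℂ)
    (ha : IsPCSymbol a) :
    ∃ F : EReal × ENNReal → Matrix (Fin n) (Fin n) ℂ,
      Continuous F ∧
      ∀ (t₁ t₂ : ℝ), 0 < t₂ →
        F ((t₁ : EReal), ENNReal.ofReal t₂) = phiA n a t₁ t₂ := by
  obtain ⟨⟨C, hC⟩, hcont, ⟨lm, hlm⟩, ⟨lp, hlp⟩, ⟨l0m, hl0m⟩, ⟨l0p, hl0p⟩⟩ := ha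
  have hcont_pos : ContinuousOn a (Ioi 0) := hcont.mono fun y hy => ne_of_gt hy
  have hcont_neg : ContinuousOn (fun y => a (-y)) (Ioi 0) :=
    hcont.comp continuous_neg.continuousOn fun y hy => neg_ne_zero.mpr (ne_of_gt hy)
  have hl0m' : Tendsto (fun y => a (-y)) (𝓝[>] 0) (𝓝 l0m) :=
    hl0m.comp (by simpa using tendsto_neg_nhdsGT_neg (a := (0 : ℝ)))
  have hlm' : Tendsto (fun y => a (-y)) atTop (𝓝 lm) := hlm.comp tendsto_neg_atTop_atBot
  set bp := extendToENNReal a l0p lp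
  set bm := extendToENNReal (fun y => a (-y)) l0m lm
  have hbp : Continuous bp := continuous_extendToENNReal hcont_pos hl0p hlp
  have hbm : Continuous bm := continuous_extendToENNReal hcont_neg hl0m' hlm'
  refine ⟨fun p => Matrix.of fun j k => ∫ s, extendedSymbol bp bm s p * (HHT n s j k : ℂ),
    continuous_matrix fun j k => ?_, fun t₁ t₂ ht₂ => ?_⟩
  · refine continuous_integral_mul_of_bounded (fun p =>
      (measurable_extendedSymbol_left hbp.measurable hbm.measurable p).aestronglyMeasurable)
      (fun p s => norm_extendedSymbol_le (norm_extendToENNReal_le hC hl0p hlp)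
        (norm_extendToENNReal_le (fun y => hC (-y)) hl0m' hlm') s p)
      (fun p => ?_) (integrable_HHT_apply n j k)
    filter_upwards [volume.ae_ne p.1.toReal] with s hs
    refine continuousAt_extendedSymbol hbp hbm fun hps => hs ?_
    rw [hps, EReal.toReal_coe]
  · ext j k
    refine integral_congr_ae ((volume.ae_ne t₁).mono fun s hs => ?_)
    exact congrArg (· * (HHT n s j k : ℂ)) (extendedSymbol_coe_ofReal
      (fun x hx => extendToENNReal_ofReal hx) (fun x hx => extendToENNReal_ofReal hx) hs ht₂)

/-- For `a ∈ PC(ℝ̄, {0})`, the matrix function `φ^a` on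
`Π = ℝ × (0,∞)` extends continuously to `Π̄ = [−∞,+∞] × [0,+∞]`
(modelled as `EReal × ℝ≥0∞`). -/
theorem phiA_extends_continuously_matrix_PC (n : ℕ) (hn : 1 ≤ n) (a : ℝ → ℂ)
    (ha : IsPCSymbol a) :
    ∃ F : EReal × ENNReal → Matrix (Fin n) (Fin n) ℂ,
      Continuous F ∧
      ∀ (t₁ t₂ : ℝ), 0 < t₂ →
        F ((t₁ : EReal), ENNReal.ofReal t₂) = phiA n a t₁ t₂ :=
  phiA_extends_continuously_matrix_PC_general n a ha
end
end
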